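/- arXiv:2603.21472 — 3 statements merged into one kernel-verified Lean document; each statement's English description precedes it below -/
import Mathlib

section
/- Let x, y, w be n×n matrices over a field such that x−y, w−y and x−w are all invertible. Then (w−y)⁻¹ + (x−w)⁻¹ is invertible, and det((w−y)⁻¹ + (x−w)⁻¹) = det(x−y) / (det(w−y)·det(x−w)). -/
open Matrix

theorem Matrix.det_inv_add_inv {m K : Type*} [Fintype m] [DecidableEq m] [Field K]
    {A B : Matrix m m K} (h : IsUnit A ↔ IsUnit B) :
    (A⁻¹ + B⁻¹).det = (A + B).det / (A.det * B.det) := by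
  rw [inv_add_inv h, det_mul, det_mul, det_nonsing_inv, det_nonsing_inv,
    Ring.inverse_eq_inv']
  ring

theorem stmt_2 {n : ℕ} {𝕜 : Type*} [Field 𝕜]
    (x y w : Matrix (Fin n) (Fin n) 𝕜)
    (hxy : IsUnit (x - y).det) (hwy : IsUnit (w - y).det) (hxw : IsUnit (x - w).det) :
    IsUnit ((w - y)⁻¹ + (x - w)⁻¹).det ∧
      ((w - y)⁻¹ + (x - w)⁻¹).det = (x - y).det / ((w - y).det * (x - w).det) := by
  have hunits : IsUnit (w - y) ↔ IsUnit (x - w) := by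
    simp only [isUnit_iff_isUnit_det, hwy, hxw]
  have hdet := det_inv_add_inv hunits
  rw [sub_add_sub_cancel'] at hdet
  exact ⟨hdet ▸ hxy.div (hwy.mul hxw), hdet⟩
end

section
/- Let l be a natural number and let α, β be complex numbers such that (α)_j ≠ 0 and (β)_j ≠ 0 for all 0 ≤ j ≤ l and (α+β+l−1)_l is defined. Then Σ_{j=0}^{l} binom(l,j) / ((α)_j · (β)_{l−j}) = (α+β+l−1)_l / ((α)_l · (β)_l). -/
open Finset

lemma desc_smeval_eq_eval (k : ℕ) (r : ℂ) :
    (descPochhammer ℤ k).smeval r = (descPochhammer ℂ k).eval r := by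
  rw [← Polynomial.aeval_eq_smeval, ← descPochhammer_map (algebraMap ℤ ℂ),
    Polynomial.aeval_def, Polynomial.eval_map]

lemma asc_split (k l : ℕ) (x : ℂ) (h : k ≤ l) :
    (ascPochhammer ℂ l).eval x
      = (ascPochhammer ℂ k).eval x * (ascPochhammer ℂ (l - k)).eval (x + k) := by
  have := congrArg (Polynomial.eval x) (ascPochhammer_mul (S := ℂ) k (l - k))
  rw [Nat.add_sub_cancel' h] at this
  rw [← this, Polynomial.eval_mul, Polynomial.eval_comp, Polynomial.eval_add,
    Polynomial.eval_X, Polynomial.eval_natCast]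

lemma vandermonde_asc (l : ℕ) (α β : ℂ) :
    (ascPochhammer ℂ l).eval (α + β + l - 1)
      = ∑ j ∈ range (l + 1), (Nat.choose l j : ℂ) *
          ((ascPochhammer ℂ j).eval (β + (l - j : ℕ)) *
            (ascPochhammer ℂ (l - j)).eval (α + j)) := by
  have h := Ring.descPochhammer_smeval_add (R := ℂ) (r := (β + l - 1)) (s := (α + l - 1)) l
    (Commute.all _ _)
  rw [Finset.Nat.sum_antidiagonal_eq_sum_range_succ
    (fun i j => (Nat.choose l i : ℂ) * ((descPochhammer ℤ i).smeval (β + l - 1) *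
      (descPochhammer ℤ j).smeval (α + l - 1)))] at h
  simp only [desc_smeval_eq_eval, descPochhammer_eval_eq_ascPochhammer] at h
  have hL : (β + ↑l - 1 + (α + ↑l - 1) - ↑l + 1) = α + β + l - 1 := by ring
  rw [hL] at h
  rw [h]
  refine Finset.sum_congr rfl fun j hj => ?_
  have hjl : j ≤ l := Nat.lt_succ_iff.mp (mem_range.mp hj)
  have h1 : (β + ↑l - 1 - ↑j + 1) = β + ((l : ℂ) - j) := by ring
  have h2 : (α + ↑l - 1 - ↑(l - j) + 1) = α + j := by
    rw [Nat.cast_sub hjl]; ring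
  rw [h1, h2, Nat.cast_sub hjl]

theorem stmt_10 (l : ℕ) (α β : ℂ)
    (hα : ∀ j ≤ l, (ascPochhammer ℂ j).eval α ≠ 0)
    (hβ : ∀ j ≤ l, (ascPochhammer ℂ j).eval β ≠ 0) :
    ∑ j ∈ range (l + 1),
        (Nat.choose l j : ℂ) /
          ((ascPochhammer ℂ j).eval α * (ascPochhammer ℂ (l - j)).eval β) =
      (ascPochhammer ℂ l).eval (α + β + l - 1) /
        ((ascPochhammer ℂ l).eval α * (ascPochhammer ℂ l).eval β) := by
  have hAl := hα l le_rfl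
  have hBl := hβ l le_rfl
  rw [vandermonde_asc l α β, Finset.sum_div]
  refine Finset.sum_congr rfl fun j hj => ?_
  have hjl : j ≤ l := Nat.lt_succ_iff.mp (mem_range.mp hj)
  have hA := asc_split j l α hjl
  have hB := asc_split (l - j) l β (Nat.sub_le l j)
  rw [Nat.sub_sub_self hjl] at hB
  have hAj := hα j hjl
  have hBj := hβ (l - j) (Nat.sub_le l j)
  have hY : (ascPochhammer ℂ (l - j)).eval (α + j) ≠ 0 := by
    intro h0; apply hAl; rw [hA, h0, mul_zero]
  have hX : (ascPochhammer ℂ j).eval (β + (l - j : ℕ)) ≠ 0 := by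
    intro h0; apply hBl; rw [hB, h0, mul_zero]
  rw [hA, hB, div_eq_div_iff (mul_ne_zero hAj hBj)
    (mul_ne_zero (mul_ne_zero hAj hY) (mul_ne_zero hBj hX))]
  ring
end

section
/- Let x, y, w be invertible n×n matrices over a field such that x−y, w−y, x−w are invertible and S := ((w−y)⁻¹ + (x−w)⁻¹)⁻¹ exists (equivalently (w−y)⁻¹+(x−w)⁻¹ is invertible). Assume moreover y⁻¹−w⁻¹, w⁻¹−x⁻¹, and their 'parallel sum' are invertible as needed. Then ((y⁻¹ − w⁻¹)⁻¹ + (w⁻¹ − x⁻¹)⁻¹)⁻¹ = w⁻¹ · S · w⁻¹, i.e. the parallel-sum expression transforms under the simultaneous inversion x ↦ −x⁻¹, y ↦ −y⁻¹, w ↦ −w⁻¹ by the quadratic map P(w)⁻¹. -/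
open Matrix

theorem stmt_16 {n : ℕ} {𝕜 : Type*} [Field 𝕜]
    (x y w : Matrix (Fin n) (Fin n) 𝕜)
    (hx : IsUnit x.det) (hy : IsUnit y.det) (hw : IsUnit w.det)
    (hxy : IsUnit (x - y).det) (hwy : IsUnit (w - y).det) (hxw : IsUnit (x - w).det)
    (hS : IsUnit ((w - y)⁻¹ + (x - w)⁻¹).det)
    (h1 : IsUnit (y⁻¹ - w⁻¹).det) (h2 : IsUnit (w⁻¹ - x⁻¹).det)
    (h3 : IsUnit ((y⁻¹ - w⁻¹)⁻¹ + (w⁻¹ - x⁻¹)⁻¹).det) :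
    ((y⁻¹ - w⁻¹)⁻¹ + (w⁻¹ - x⁻¹)⁻¹)⁻¹ =
      w⁻¹ * ((w - y)⁻¹ + (x - w)⁻¹)⁻¹ * w⁻¹ := by
  have e1 : y⁻¹ - w⁻¹ = y⁻¹ * (w - y) * w⁻¹ := by
    rw [Matrix.mul_sub, Matrix.sub_mul, Matrix.nonsing_inv_mul _ hy,
      Matrix.mul_assoc, Matrix.mul_nonsing_inv _ hw, Matrix.mul_one, Matrix.one_mul]
  have e2 : w⁻¹ - x⁻¹ = w⁻¹ * (x - w) * x⁻¹ := by
    rw [Matrix.mul_sub, Matrix.sub_mul, Matrix.nonsing_inv_mul _ hw,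
      Matrix.mul_assoc, Matrix.mul_nonsing_inv _ hx, Matrix.mul_one, Matrix.one_mul]
  have i1 : (y⁻¹ - w⁻¹)⁻¹ = w * (w - y)⁻¹ * y := by
    rw [e1, Matrix.mul_inv_rev, Matrix.mul_inv_rev,
      Matrix.nonsing_inv_nonsing_inv _ hy, Matrix.nonsing_inv_nonsing_inv _ hw,
      Matrix.mul_assoc]
  have i2 : (w⁻¹ - x⁻¹)⁻¹ = x * (x - w)⁻¹ * w := by
    rw [e2, Matrix.mul_inv_rev, Matrix.mul_inv_rev,
      Matrix.nonsing_inv_nonsing_inv _ hx, Matrix.nonsing_inv_nonsing_inv _ hw,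
      Matrix.mul_assoc]
  have key : (y⁻¹ - w⁻¹)⁻¹ + (w⁻¹ - x⁻¹)⁻¹
      = w * ((w - y)⁻¹ + (x - w)⁻¹) * w := by
    rw [i1, i2]
    have t1 : w * (w - y)⁻¹ * y = w * (w - y)⁻¹ * w - w := by
      have : w * (w - y)⁻¹ * w - w * (w - y)⁻¹ * y = w := by
        rw [Matrix.mul_assoc w, Matrix.mul_assoc w, ← Matrix.mul_sub, ← Matrix.mul_sub,
          Matrix.nonsing_inv_mul _ hwy, Matrix.mul_one]
      linear_combination (norm := noncomm_ring) -this
    have t2 : x * (x - w)⁻¹ * w = w * (x - w)⁻¹ * w + w := by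
      have : x * (x - w)⁻¹ * w - w * (x - w)⁻¹ * w = w := by
        rw [← Matrix.sub_mul, ← Matrix.sub_mul, Matrix.mul_nonsing_inv _ hxw, Matrix.one_mul]
      linear_combination (norm := noncomm_ring) this
    rw [t1, t2]
    noncomm_ring
  rw [key, Matrix.mul_inv_rev, Matrix.mul_inv_rev, Matrix.mul_assoc]
end
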